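/- (In classical logic.) Every natural space is spreadlike; indeed, every natural space 𝒱 is isomorphic to a spread whose underlying tree is the tree (ℕ*,⊑) of natural Baire space. -/

import Mathlib

/-! # Natural Topology: basic framework (Waaldijk) -/

/-- A pre-natural space: a countable set of basic dots with a decidable
pre-apartness `apart` and a decidable refinement partial order `refines`. -/
structure PreNaturalSpace (V : Type) : Type where
  countable' : Countable V
  apart : V → V → Prop
  refines : V → V → Prop
  apart_dec : DecidableRel apart
  refines_dec : DecidableRel refines
  apart_symm : ∀ a b, apart a b → apart b a
  apart_irrefl : ∀ a, ¬ apart a a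
  apart_mono : ∀ a b c, refines a b → apart c b → apart c a
  refines_refl : ∀ a, refines a a
  refines_trans : ∀ a b c, refines a b → refines b c → refines a c
  refines_antisymm : ∀ a b, refines a b → refines b a → a = b

namespace PreNaturalSpace

variable {V W : Type}

/-- `a ≺ b` : strict refinement. -/
def strict (P : PreNaturalSpace V) (a b : V) : Prop := P.refines a b ∧ a ≠ b

/-- A point is a shrinking sequence of dots deciding every apart pair of dots. -/
structure IsPoint (P : PreNaturalSpace V) (p : ℕ → V) : Prop where
  mono : ∀ n, P.refines (p (n + 1)) (p n)
  shrink : ∀ n, ∃ m, P.strict (p m) (p n)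
  decides : ∀ a b, P.apart a b → ∃ m, P.apart (p m) a ∨ P.apart (p m) b

/-- The set of points of a pre-natural space. -/
def Pt (P : PreNaturalSpace V) : Type := { p : ℕ → V // P.IsPoint p }

/-- `p` begins with the dot `a` : some `p m ≺ a`. -/
def begins (P : PreNaturalSpace V) (p : ℕ → V) (a : V) : Prop := ∃ m, P.strict (p m) a

/-- Apartness between a dot and a point. -/
def dApart (P : PreNaturalSpace V) (a : V) (p : ℕ → V) : Prop := ∃ m, P.apart (p m) a

/-- Apartness between points. -/
def pApart (P : PreNaturalSpace V) (p q : P.Pt) : Prop := ∃ n, P.apart (p.1 n) (q.1 n)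

/-- Equivalence of points: the negation of apartness. -/
def pEquiv (P : PreNaturalSpace V) (p q : P.Pt) : Prop := ¬ P.pApart p q

variable (P : PreNaturalSpace V)

lemma refines_of_le {p : ℕ → V} (hp : ∀ n, P.refines (p (n + 1)) (p n)) :
    ∀ {m k : ℕ}, m ≤ k → P.refines (p k) (p m) := by
  intro m k h
  induction h with
  | refl => exact P.refines_refl _
  | step h ih => exact P.refines_trans _ _ _ (hp _) ih

lemma begins_mono {z : ℕ → V} (hz : P.IsPoint z) {a b : V} (hab : P.refines a b)
    (h : P.begins z a) : P.begins z b := by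
  obtain ⟨j, hj1, hj2⟩ := h
  have hzb : P.refines (z j) b := P.refines_trans _ _ _ hj1 hab
  by_cases he : z j = b
  · obtain ⟨i, hi1, hi2⟩ := hz.shrink j
    exact ⟨i, P.refines_trans _ _ _ hi1 hzb, fun h' => hi2 (h'.trans he.symm)⟩
  · exact ⟨j, hzb, he⟩

/-- The natural (apartness) topology as a predicate on subsets of the point set. -/
def NatOpen (U : Set P.Pt) : Prop :=
  ∀ x ∈ U, ∀ y : P.Pt, P.pApart y x ∨ ∃ m, { z : P.Pt | P.begins z.1 (y.1 m) } ⊆ U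

instance instTopPt : TopologicalSpace P.Pt where
  IsOpen := P.NatOpen
  isOpen_univ := fun _ _ _ => Or.inr ⟨0, fun _ _ => trivial⟩
  isOpen_inter := by
    intro U U' hU hU' x hx y
    rcases hU x hx.1 y with h | ⟨m, hm⟩
    · exact Or.inl h
    rcases hU' x hx.2 y with h | ⟨k, hk⟩
    · exact Or.inl h
    refine Or.inr ⟨max m k, fun z hz => ⟨hm ?_, hk ?_⟩⟩
    · exact P.begins_mono z.2 (P.refines_of_le y.2.mono (le_max_left m k)) hz
    · exact P.begins_mono z.2 (P.refines_of_le y.2.mono (le_max_right m k)) hz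
  isOpen_sUnion := by
    intro S hS x hx y
    obtain ⟨U, hU, hxU⟩ := hx
    rcases hS U hU x hxU y with h | ⟨m, hm⟩
    · exact Or.inl h
    · exact Or.inr ⟨m, fun z hz => ⟨U, hU, hm hz⟩⟩

lemma pEquiv_refl (p : P.Pt) : P.pEquiv p p := fun ⟨_, h⟩ => P.apart_irrefl _ h

lemma pEquiv_symm {p q : P.Pt} (h : P.pEquiv p q) : P.pEquiv q p :=
  fun ⟨n, hn⟩ => h ⟨n, P.apart_symm _ _ hn⟩

lemma pEquiv_trans {p q r : P.Pt} (hpq : P.pEquiv p q) (hqr : P.pEquiv q r) :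
    P.pEquiv p r := by
  rintro ⟨n, hn⟩
  obtain ⟨m, hm⟩ := q.2.decides (p.1 n) (r.1 n) hn
  rcases hm with hm | hm
  · -- q.1 m apart from p.1 n
    refine hpq ⟨max m n, ?_⟩
    have h1 : P.apart (p.1 n) (q.1 (max m n)) :=
      P.apart_mono _ _ _ (P.refines_of_le q.2.mono (le_max_left m n)) (P.apart_symm _ _ hm)
    have h2 : P.apart (q.1 (max m n)) (p.1 (max m n)) :=
      P.apart_mono _ _ _ (P.refines_of_le p.2.mono (le_max_right m n)) (P.apart_symm _ _ h1)
    exact P.apart_symm _ _ h2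
  · refine hqr ⟨max m n, ?_⟩
    have h1 : P.apart (r.1 n) (q.1 (max m n)) :=
      P.apart_mono _ _ _ (P.refines_of_le q.2.mono (le_max_left m n)) (P.apart_symm _ _ hm)
    exact P.apart_mono _ _ _ (P.refines_of_le r.2.mono (le_max_right m n))
      (P.apart_symm _ _ h1)

/-- The setoid of points modulo `≡`. -/
def ptSetoid : Setoid P.Pt :=
  ⟨P.pEquiv, ⟨P.pEquiv_refl, P.pEquiv_symm, P.pEquiv_trans⟩⟩

/-- `â` : the set of points beginning with the dot `a`. -/
def hatSet (a : V) : Set P.Pt := { p | P.begins p.1 a }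

/-- `ā` : the `≡`-closure of `â`. -/
def barSet (a : V) : Set P.Pt := { p | ∃ q : P.Pt, P.begins q.1 a ∧ P.pEquiv p q }

/-- A natural space is basic-open when every `ā` is open. -/
def BasicOpen : Prop := ∀ a : V, IsOpen (P.barSet a)

/-- Existence of a maximal dot. -/
def HasMaxDot : Prop := ∃ m, ∀ a, P.refines a m

/-- Every basic dot begins at least one point. -/
def AllDotsInhabited : Prop := ∀ a : V, ∃ p : ℕ → V, P.IsPoint p ∧ P.begins p a

/-- The conditions making the point set of a pre-natural space a natural space. -/
def IsNaturalSpace : Prop := P.HasMaxDot ∧ P.AllDotsInhabited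

end PreNaturalSpace

/-- A refinement morphism between (pre-)natural spaces: a map on dots sending
points to points and reflecting apartness of points. -/
structure RefMorphism {V W : Type} (P : PreNaturalSpace V) (Q : PreNaturalSpace W) : Type where
  toFun : V → W
  maps_points : ∀ p : ℕ → V, P.IsPoint p → Q.IsPoint (fun n => toFun (p n))
  reflects_apart : ∀ p q : ℕ → V, P.IsPoint p → P.IsPoint q →
    (∃ n, Q.apart (toFun (p n)) (toFun (q n))) → ∃ n, P.apart (p n) (q n)

/-- The induced map on points of a refinement morphism. -/
def RefMorphism.pointMap {V W : Type} {P : PreNaturalSpace V} {Q : PreNaturalSpace W}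
    (f : RefMorphism P Q) (p : P.Pt) : Q.Pt :=
  ⟨fun n => f.toFun (p.1 n), f.maps_points p.1 p.2⟩

namespace PreNaturalSpace

variable {V W : Type} (P : PreNaturalSpace V)

/-- Restriction of a pre-natural space to a subset of dots. -/
noncomputable def restrict (S : Set V) : PreNaturalSpace S where
  countable' := by haveI := P.countable'; exact inferInstance
  apart a b := P.apart a.1 b.1
  refines a b := P.refines a.1 b.1
  apart_dec := Classical.decRel _
  refines_dec := Classical.decRel _
  apart_symm _ _ h := P.apart_symm _ _ h
  apart_irrefl a := P.apart_irrefl a.1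
  apart_mono _ _ _ h1 h2 := P.apart_mono _ _ _ h1 h2
  refines_refl a := P.refines_refl a.1
  refines_trans _ _ _ h1 h2 := P.refines_trans _ _ _ h1 h2
  refines_antisymm _ _ h1 h2 := Subtype.ext (P.refines_antisymm _ _ h1 h2)

/-! ## Trail spaces -/

/-- A `≺`-trail: a finite strictly refining sequence `a₀ ≻ a₁ ≻ …`. -/
def Trail : Type := { l : List V // l.Chain' fun a b => P.strict b a }

lemma strict_trans_flip : Transitive (fun a b : V => P.strict b a) := by
  rintro a b c ⟨h1, h1'⟩ ⟨h2, h2'⟩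
  refine ⟨P.refines_trans _ _ _ h2 h1, fun he => ?_⟩
  exact h2' (P.refines_antisymm _ _ h2 (he ▸ h1))

lemma last_refines_of_prefix {a b : List V}
    (ha : a.Chain' fun x y => P.strict y x) (hpre : b <+: a)
    {x y : V} (hx : x ∈ a.getLast?) (hy : y ∈ b.getLast?) :
    P.refines x y := by
  haveI : IsTrans V (fun x y : V => P.strict y x) := ⟨fun _ _ _ h1 h2 => P.strict_trans_flip h1 h2⟩
  have hpw : a.Pairwise fun x y => P.strict y x := List.isChain_iff_pairwise.mp ha
  obtain ⟨t, rfl⟩ := hpre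
  rcases eq_or_ne t [] with rfl | ht
  · rw [List.append_nil] at hx
    have : x = y := by
      rw [Option.mem_def] at hx hy
      exact Option.some_injective _ (hx ▸ hy ▸ rfl)
    exact this ▸ P.refines_refl x
  · rw [List.getLast?_append_of_ne_nil _ ht] at hx
    have hxt : x ∈ t := List.mem_of_mem_getLast? hx
    have hyb : y ∈ b := List.mem_of_mem_getLast? hy
    have := (List.pairwise_append.mp hpw).2.2 y hyb x hxt
    exact this.1

/-- The trail space of a pre-natural space: dots are `≺`-trails, with
`a ⊑* b` iff `b` is an initial segment of `a`, and `a #* b` iff the last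
dots of `a` and `b` are apart. -/
noncomputable def trailSpace : PreNaturalSpace P.Trail where
  countable' := by haveI := P.countable'; exact inferInstanceAs (Countable
    { l : List V // l.Chain' fun a b => P.strict b a })
  apart a b := ∃ x ∈ a.1.getLast?, ∃ y ∈ b.1.getLast?, P.apart x y
  refines a b := b.1 <+: a.1
  apart_dec := Classical.decRel _
  refines_dec := Classical.decRel _
  apart_symm := by
    rintro a b ⟨x, hx, y, hy, hxy⟩
    exact ⟨y, hy, x, hx, P.apart_symm _ _ hxy⟩
  apart_irrefl := by
    rintro a ⟨x, hx, y, hy, hxy⟩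
    rw [Option.mem_def] at hx hy
    have : x = y := Option.some_injective _ (hx ▸ hy ▸ rfl)
    exact P.apart_irrefl x (this ▸ hxy)
  apart_mono := by
    rintro a b c hab ⟨x, hx, y, hy, hxy⟩
    have hbne : b.1 ≠ [] := by
      intro h
      rw [h] at hy
      simp at hy
    have hane : a.1 ≠ [] := by
      intro h
      exact hbne (List.prefix_nil.mp (h ▸ hab))
    obtain ⟨z, hz⟩ : ∃ z, z ∈ a.1.getLast? := by
      rcases h : a.1.getLast? with _ | z
      · exact absurd (List.getLast?_eq_none_iff.mp h) hane
      · exact ⟨z, rfl⟩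
    have hzy : P.refines z y := P.last_refines_of_prefix a.2 hab hz hy
    exact ⟨x, hx, z, hz, P.apart_mono _ _ _ hzy hxy⟩
  refines_refl a := List.prefix_refl a.1
  refines_trans _ _ _ h1 h2 := h2.trans h1
  refines_antisymm a b h1 h2 :=
    Subtype.ext (h2.eq_of_length (le_antisymm h2.length_le h1.length_le))

end PreNaturalSpace

open Classical in
/-- `p♯(n)` : the `≺`-trail obtained from `p₀, …, p_{n-1}` by deleting repetitions
(for a shrinking sequence `p`, repetitions are consecutive). -/
noncomputable def segList {V : Type} (p : ℕ → V) : ℕ → List V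
  | 0 => []
  | n + 1 =>
    if (segList p n).getLast? = some (p n) then segList p n
    else segList p n ++ [p n]

namespace PreNaturalSpace

variable {V W : Type} (P : PreNaturalSpace V)

/-- The map on trail dots sending a nonempty trail to its last element and
the empty trail to `m`. -/
def lastDot (m : V) (q : P.Trail) : V := q.1.getLast?.getD m

/-- `g` is the point map induced by a trail morphism `f` (a refinement morphism
on the trail space): `g p = f (p♯(0)), f (p♯(1)), …`. -/
def InducedByTrailMorphism (Q : PreNaturalSpace W) (f : RefMorphism P.trailSpace Q)
    (g : P.Pt → Q.Pt) : Prop :=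
  ∀ p : P.Pt, ∃ t : P.trailSpace.Pt, (∀ n, (t.1 n).1 = segList p.1 n) ∧ g p = f.pointMap t

/-- `g` is a natural morphism map: induced by a refinement morphism or by a trail morphism. -/
def IsNaturalMorphismMap (Q : PreNaturalSpace W) (g : P.Pt → Q.Pt) : Prop :=
  (∃ f : RefMorphism P Q, ∀ p, g p = f.pointMap p) ∨
  (∃ f : RefMorphism P.trailSpace Q, P.InducedByTrailMorphism Q f g)

/-- Two natural spaces are isomorphic: natural morphisms both ways, inverse up to `≡`. -/
def AreIsomorphic (Q : PreNaturalSpace W) : Prop :=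
  ∃ (f : P.Pt → Q.Pt) (g : Q.Pt → P.Pt),
    P.IsNaturalMorphismMap Q f ∧ Q.IsNaturalMorphismMap P g ∧
    (∀ x, P.pEquiv (g (f x)) x) ∧ (∀ y, Q.pEquiv (f (g y)) y)

/-- A natural space is a basic neighborhood space iff it is isomorphic to a basic-open space. -/
def IsBasicNbhdSpace : Prop :=
  ∃ (W' : Type) (Q : PreNaturalSpace W'), Q.IsNaturalSpace ∧ Q.BasicOpen ∧ P.AreIsomorphic Q

/-! ## Trees, treas, spreads, spraids, fans -/

/-- `a` is a successor of `c`. -/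
def IsSucc (a c : V) : Prop := P.strict a c ∧ ∀ b, P.strict a b → P.refines b c → b = c

/-- A successor-trail (as a list, each entry a successor of the previous one). -/
def SuccChain (l : List V) : Prop := l.Chain' fun x y => P.IsSucc y x

/-- A successor-trail from `m` to `a`. -/
def IsSuccTrailFromTo (m a : V) (l : List V) : Prop :=
  P.SuccChain l ∧ l.head? = some m ∧ l.getLast? = some a

/-- `(V,⊑)` is a tree. -/
def IsTree : Prop :=
  ∃ m, (∀ a, P.refines a m) ∧ ∀ a, ∃! l : List V, P.IsSuccTrailFromTo m a l

/-- `(V,⊑)` is a trea. -/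
def IsTrea : Prop :=
  ∃ m, (∀ a, P.refines a m) ∧ (∀ a, { b | P.refines a b }.Finite) ∧
    ∀ a, ∃ g : ℕ, ∀ l : List V, P.IsSuccTrailFromTo m a l → l.length = g

/-- Every infinite successor-trail is a point. -/
def SuccTrailsArePoints : Prop :=
  ∀ q : ℕ → V, (∀ n, P.IsSucc (q (n + 1)) (q n)) → P.IsPoint q

def IsSpread : Prop := P.IsTree ∧ P.SuccTrailsArePoints

def IsSpraid : Prop := P.IsTrea ∧ P.SuccTrailsArePoints

/-- Finitely branching: every dot has finitely many successors. -/
def FinBranching : Prop := ∀ a : V, { b | P.IsSucc b a }.Finite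

def IsFan : Prop := P.IsSpread ∧ P.FinBranching

def IsFann : Prop := P.IsSpraid ∧ P.FinBranching

end PreNaturalSpace
/-! ## Natural Baire space and natural Cantor space -/

/-- Natural Baire space: dots are finite sequences of naturals, `b ⊑ a` iff
`a` is an initial segment of `b`, apart iff incomparable. -/
noncomputable def BairePre : PreNaturalSpace (List ℕ) where
  countable' := inferInstance
  apart a b := ¬ a <+: b ∧ ¬ b <+: a
  refines a b := b <+: a
  apart_dec := Classical.decRel _
  refines_dec := Classical.decRel _
  apart_symm _ _ h := ⟨h.2, h.1⟩
  apart_irrefl a h := h.1 (List.prefix_refl a)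
  apart_mono := by
    intro a b c hab hcb
    constructor
    · intro hca
      rcases List.prefix_or_prefix_of_prefix hca hab with h | h
      · exact hcb.1 h
      · exact hcb.2 h
    · intro hac
      exact hcb.2 (hab.trans hac)
  refines_refl a := List.prefix_refl a
  refines_trans _ _ _ h1 h2 := h2.trans h1
  refines_antisymm _ _ h1 h2 := h2.eq_of_length (le_antisymm h2.length_le h1.length_le)

/-- Natural Cantor space: the restriction of natural Baire space to finite 0-1 sequences. -/
noncomputable def CantorPre : PreNaturalSpace ({ l : List ℕ | ∀ x ∈ l, x ≤ 1 }) :=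
  BairePre.restrict { l : List ℕ | ∀ x ∈ l, x ≤ 1 }

/-- The sequence of initial segments of `α ∈ ℕ^ℕ`. -/
def initSegs (α : ℕ → ℕ) (n : ℕ) : List ℕ := (List.range n).map α

/-!
Enumerate the dots of `𝒱`, and the pairs of dots so that every pair occurs infinitely often.
A sequence `s ∈ ℕ*` is decoded into a dot by descending from the maximal dot: at depth `i` the
entry `n` selects the `n`-th dot if that strictly refines the current dot and decides the `i`-th
pair, and a fixed such refinement otherwise. Calling `s` and `t` apart when their decodings are
makes Baire's tree a spread, and decoding its points gives points of `𝒱`. Conversely a trail is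
encoded greedily, keeping exactly those of its dots that the decoding would select; this is a
trail morphism into the spread. In both composites the `n`-th dot is comparable with the `n`-th
dot of the original point, so no composite is apart from the identity.
-/

namespace PreNaturalSpace

variable {V : Type} (P : PreNaturalSpace V)

lemma strict_of_refines_of_strict {a b c : V} (hab : P.refines a b) (hbc : P.strict b c) :
    P.strict a c :=
  ⟨P.refines_trans _ _ _ hab hbc.1, fun hac =>
    hbc.2 (P.refines_antisymm _ _ hbc.1 (hac ▸ hab))⟩

lemma strict_of_strict_of_refines {a b c : V} (hab : P.strict a b) (hbc : P.refines b c) :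
    P.strict a c :=
  ⟨P.refines_trans _ _ _ hab.1 hbc, fun hac =>
    hab.2 (P.refines_antisymm _ _ hab.1 (hac ▸ hbc))⟩

lemma apart_mono_left {a b c : V} (hab : P.refines a b) (hbc : P.apart b c) : P.apart a c :=
  P.apart_symm _ _ (P.apart_mono _ _ _ hab (P.apart_symm _ _ hbc))

lemma not_apart_of_refines {a b : V} (h : P.refines a b ∨ P.refines b a) : ¬ P.apart a b := by
  rcases h with h | h
  · exact fun hab => P.apart_irrefl a (P.apart_mono _ _ _ h hab)
  · exact fun hab => P.apart_irrefl b (P.apart_mono _ _ _ h (P.apart_symm _ _ hab))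

variable {P} in
lemma IsPoint.refines_of_le {p : ℕ → V} (hp : P.IsPoint p) {m k : ℕ} (h : m ≤ k) :
    P.refines (p k) (p m) :=
  P.refines_of_le hp.mono h

variable {P} in
lemma IsPoint.not_apart {p : ℕ → V} (hp : P.IsPoint p) (i j : ℕ) : ¬ P.apart (p i) (p j) :=
  P.not_apart_of_refines ((le_total j i).imp hp.refines_of_le hp.refines_of_le)

def Decides (b : V) (pr : V × V) : Prop := P.apart pr.1 pr.2 → P.apart b pr.1 ∨ P.apart b pr.2

variable {P} in
lemma Decides.mono {b c : V} {pr : V × V} (hb : P.Decides b pr) (hcb : P.refines c b) :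
    P.Decides c pr :=
  fun h => (hb h).imp (P.apart_mono_left hcb) (P.apart_mono_left hcb)

def DecidingStep (pr : V × V) (a b : V) : Prop := P.strict b a ∧ P.Decides b pr

lemma exists_decidingStep (hP : P.AllDotsInhabited) (pr : V × V) (a : V) :
    ∃ b, P.DecidingStep pr a b := by
  obtain ⟨p, hp, k, hk⟩ := hP a
  by_cases hpr : P.apart pr.1 pr.2
  · obtain ⟨m, hm⟩ := hp.decides _ _ hpr
    refine ⟨p (max k m), P.strict_of_refines_of_strict (hp.refines_of_le (le_max_left k m)) hk,
      fun _ => hm.imp ?_ ?_⟩ <;>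
    exact P.apart_mono_left (hp.refines_of_le (le_max_right k m))
  · exact ⟨p k, hk, fun h => absurd h hpr⟩

section Chain

variable {P} {l u : List V}

lemma pairwise_of_chain (hl : l.IsChain fun a b => P.strict b a) :
    l.Pairwise fun a b => P.strict b a :=
  have : Trans (fun a b : V => P.strict b a) (fun a b => P.strict b a) (fun a b => P.strict b a) :=
    ⟨fun h₁ h₂ => P.strict_trans_flip h₁ h₂⟩
  List.isChain_iff_pairwise.mp hl

lemma strict_of_chain_append (hl : (l ++ u).IsChain fun a b => P.strict b a) {x y : V}
    (hx : x ∈ l) (hy : y ∈ u) : P.strict y x :=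
  (List.pairwise_append.mp (pairwise_of_chain hl)).2.2 x hx y hy

lemma getLast_strict_of_mem_dropLast (hl : l.IsChain fun a b => P.strict b a) (hne : l ≠ [])
    {x : V} (hx : x ∈ l.dropLast) : P.strict (l.getLast hne) x := by
  rw [← List.dropLast_append_getLast hne] at hl
  exact strict_of_chain_append hl hx (List.mem_singleton_self _)

lemma getLast_refines_of_chain (hl : l.IsChain fun a b => P.strict b a) (hne : l ≠ [])
    {x : V} (hx : x ∈ l) : P.refines (l.getLast hne) x := by
  rw [← List.dropLast_append_getLast hne, List.mem_append, List.mem_singleton] at hx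
  rcases hx with hx | rfl
  · exact (getLast_strict_of_mem_dropLast hl hne hx).1
  · exact P.refines_refl _

end Chain

end PreNaturalSpace

lemma List.inits_concat {α : Type} (s : List α) (a : α) :
    (s ++ [a]).inits = s.inits ++ [s ++ [a]] := by
  simp [List.inits_append]

namespace BairePre

lemma isSucc_iff {s t : List ℕ} : BairePre.IsSucc s t ↔ ∃ n, s = t ++ [n] := by
  constructor
  · rintro ⟨⟨⟨u, rfl⟩, hne⟩, hmin⟩
    obtain ⟨n, u, rfl⟩ := List.exists_cons_of_ne_nil (fun hu : u = [] => hne (by simp [hu]))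
    refine ⟨n, ?_⟩
    by_contra hu
    have hstrict : BairePre.strict (t ++ n :: u) (t ++ [n]) :=
      ⟨⟨u, by simp⟩, hu⟩
    simpa using hmin _ hstrict ⟨[n], rfl⟩
  · rintro ⟨n, rfl⟩
    refine ⟨⟨⟨[n], rfl⟩, by simp⟩, fun b ⟨hb, hbne⟩ htb => ?_⟩
    rcases List.prefix_concat_iff.mp hb with hb | hb
    · exact absurd hb.symm hbne
    · exact hb.eq_of_length (le_antisymm hb.length_le htb.length_le)

lemma isSuccTrailFromTo_inits (a : List ℕ) : BairePre.IsSuccTrailFromTo [] a a.inits := by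
  induction a using List.reverseRecOn with
  | nil => exact ⟨List.isChain_singleton _, rfl, rfl⟩
  | append_singleton a n ih =>
    obtain ⟨hchain, hhead, hlast⟩ := ih
    refine ⟨?_, ?_, by simp⟩
    · rw [PreNaturalSpace.SuccChain, List.Chain', List.inits_concat, List.isChain_append]
      refine ⟨hchain, List.isChain_singleton _, fun x hx y hy => ?_⟩
      rw [hlast, Option.mem_some_iff] at hx
      simp only [List.head?_cons, Option.mem_some_iff] at hy
      exact isSucc_iff.mpr ⟨n, by rw [← hx, ← hy]⟩
    · rw [List.inits_concat, List.head?_append, hhead, Option.some_or]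

lemma eq_inits_of_isSuccTrailFromTo {a : List ℕ} {l : List (List ℕ)}
    (h : BairePre.IsSuccTrailFromTo [] a l) : l = a.inits := by
  induction l using List.reverseRecOn generalizing a with
  | nil => simp [PreNaturalSpace.IsSuccTrailFromTo] at h
  | append_singleton l x ih =>
    obtain ⟨hchain, hhead, hlast⟩ := h
    obtain rfl : x = a := by simpa using hlast
    rcases List.eq_nil_or_concat' l with rfl | ⟨l', y, rfl⟩
    · obtain rfl : x = [] := by simpa using hhead
      rfl
    rw [PreNaturalSpace.SuccChain, List.Chain', List.isChain_append] at hchain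
    obtain ⟨n, rfl⟩ := isSucc_iff.mp (hchain.2.2 y (by simp) x (by simp))
    have hl : l' ++ [y] = y.inits :=
      ih ⟨hchain.1, by simpa [List.head?_append] using hhead, by simp⟩
    rw [hl, List.inits_concat]

theorem isTree : BairePre.IsTree :=
  ⟨[], fun _ => List.nil_prefix, fun a =>
    ⟨a.inits, isSuccTrailFromTo_inits a, fun _ hl => eq_inits_of_isSuccTrailFromTo hl⟩⟩

end BairePre

lemma List.exists_le_length_of_forall_exists_prefix_ne {X : Type} {u : ℕ → List X}
    (hu : ∀ n, ∃ m, u n <+: u m ∧ u m ≠ u n) (N : ℕ) : ∃ M, N ≤ (u M).length := by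
  induction N with
  | zero => exact ⟨0, Nat.zero_le _⟩
  | succ N ih =>
    obtain ⟨M, hM⟩ := ih
    obtain ⟨m, hpre, hne⟩ := hu M
    have : (u M).length ≠ (u m).length := fun h => hne (hpre.eq_of_length h).symm
    exact ⟨m, by have := hpre.length_le; omega⟩

section SegList

variable {V : Type} (p : ℕ → V)

open Classical in
lemma segList_succ (n : ℕ) :
    segList p (n + 1) =
      if (segList p n).getLast? = some (p n) then segList p n else segList p n ++ [p n] := by
  rw [segList]

lemma getLast?_segList_succ (n : ℕ) : (segList p (n + 1)).getLast? = some (p n) := by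
  rw [segList_succ]
  split_ifs with h
  · exact h
  · exact List.getLast?_concat

lemma segList_prefix_succ (n : ℕ) : segList p n <+: segList p (n + 1) := by
  rw [segList_succ]
  split_ifs
  · exact List.prefix_refl _
  · exact List.prefix_append _ _

lemma segList_prefix {k l : ℕ} (h : k ≤ l) : segList p k <+: segList p l := by
  induction h with
  | refl => exact List.prefix_refl _
  | step _ ih => exact ih.trans (segList_prefix_succ p _)

lemma exists_eq_of_mem_segList {n : ℕ} {x : V} (h : x ∈ segList p n) : ∃ j, x = p j := by
  induction n with
  | zero => simp [segList] at h
  | succ k ih =>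
    rw [segList_succ] at h
    split_ifs at h
    · exact ih h
    · rcases List.mem_append.mp h with h | h
      · exact ih h
      · exact ⟨k, List.mem_singleton.mp h⟩

lemma PreNaturalSpace.isChain_segList (P : PreNaturalSpace V)
    (hp : ∀ n, P.refines (p (n + 1)) (p n)) (n : ℕ) :
    (segList p n).IsChain fun a b => P.strict b a := by
  induction n with
  | zero => exact List.isChain_nil
  | succ k ih =>
    rw [segList_succ]
    split_ifs with h
    · exact ih
    refine List.isChain_append.mpr ⟨ih, List.isChain_singleton _, fun x hx y hy => ?_⟩
    obtain rfl : p k = y := by simpa using hy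
    cases k with
    | zero => simp [segList] at hx
    | succ j =>
      obtain rfl : x = p j := by simpa [getLast?_segList_succ] using hx.symm
      exact ⟨hp j, fun he => h (by rw [getLast?_segList_succ, he])⟩

end SegList

namespace PreNaturalSpace

variable {V : Type} {P : PreNaturalSpace V}

/-- The trail-space point `p♯(0), p♯(1), …` of a point `p`. -/
noncomputable def Pt.sharp (p : P.Pt) : P.trailSpace.Pt :=
  ⟨fun n => ⟨segList p.1 n, P.isChain_segList p.1 p.2.mono n⟩,
  { mono := fun n => segList_prefix_succ p.1 n
    shrink := by
      rintro (_ | k)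
      · exact ⟨1, List.nil_prefix, fun h => by
          simpa [segList] using congrArg Subtype.val h⟩
      · obtain ⟨j, hj⟩ := p.2.shrink k
        have hkj : k + 1 ≤ j + 1 := by
          by_contra hlt
          exact hj.2 (P.refines_antisymm _ _ hj.1 (p.2.refines_of_le (by omega)))
        refine ⟨j + 1, segList_prefix p.1 hkj, fun h => hj.2 ?_⟩
        have := congrArg (fun t : P.Trail => t.1.getLast?) h
        simpa [getLast?_segList_succ] using this
    decides := by
      rintro A B ⟨x, hx, y, hy, hxy⟩
      obtain ⟨j, hj⟩ := p.2.decides x y hxy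
      refine ⟨j + 1, hj.imp (fun h => ?_) (fun h => ?_)⟩
      · exact ⟨p.1 j, getLast?_segList_succ p.1 j, x, hx, h⟩
      · exact ⟨p.1 j, getLast?_segList_succ p.1 j, y, hy, h⟩ }⟩

lemma trailPoint_prefix (t : P.trailSpace.Pt) {k l : ℕ} (h : k ≤ l) : (t.1 k).1 <+: (t.1 l).1 :=
  P.trailSpace.refines_of_le t.2.mono h

lemma trailPoint_exists_le_length (t : P.trailSpace.Pt) (N : ℕ) :
    ∃ M, N ≤ (t.1 M).1.length :=
  List.exists_le_length_of_forall_exists_prefix_ne (u := fun n => (t.1 n).1)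
    (fun n => (t.2.shrink n).imp fun _ hm => ⟨hm.1, fun h => hm.2 (Subtype.ext h)⟩) N

lemma trailPoint_eventually_decides (t : P.trailSpace.Pt) (pr : V × V) :
    ∃ m, ∀ M ≥ m, ∀ b ∈ (t.1 M).1.getLast?, P.Decides b pr := by
  by_cases hpr : P.apart pr.1 pr.2
  · have hsingle : P.trailSpace.apart ⟨[pr.1], List.isChain_singleton _⟩
        ⟨[pr.2], List.isChain_singleton _⟩ := ⟨pr.1, rfl, pr.2, rfl, hpr⟩
    obtain ⟨m, hm⟩ := t.2.decides _ _ hsingle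
    have hc : ∃ c ∈ (t.1 m).1.getLast?, P.Decides c pr := by
      rcases hm with ⟨c, hc, x, hx, h⟩ | ⟨c, hc, y, hy, h⟩
      · obtain rfl : pr.1 = x := Option.some_inj.mp hx
        exact ⟨c, hc, fun _ => Or.inl h⟩
      · obtain rfl : pr.2 = y := Option.some_inj.mp hy
        exact ⟨c, hc, fun _ => Or.inr h⟩
    obtain ⟨c, hc, hdec⟩ := hc
    exact ⟨m, fun M hM b hb =>
      hdec.mono (P.last_refines_of_prefix (t.1 M).2 (trailPoint_prefix t hM) hb hc)⟩
  · exact ⟨0, fun _ _ _ _ h => absurd h hpr⟩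

end PreNaturalSpace

structure BaireCoding {V : Type} (P : PreNaturalSpace V) where
  top : V
  refines_top : ∀ a, P.refines a top
  dot : ℕ → V
  index : V → ℕ
  dot_index : ∀ a, dot (index a) = a
  pair : ℕ → V × V
  exists_pair_eq : ∀ pr N, ∃ i, N ≤ i ∧ pair i = pr
  child : V → V × V → V
  decidingStep_child : ∀ a pr, P.DecidingStep pr a (child a pr)

namespace BaireCoding

open PreNaturalSpace

variable {V : Type} {P : PreNaturalSpace V}

lemma nonempty (hP : P.IsNaturalSpace) : Nonempty (BaireCoding P) := by
  obtain ⟨⟨top, refines_top⟩, hinh⟩ := hP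
  have := P.countable'
  have : Nonempty V := ⟨top⟩
  obtain ⟨dot, hdot⟩ := exists_surjective_nat V
  obtain ⟨pairs, hpairs⟩ := exists_surjective_nat (V × V)
  choose child decidingStep_child using fun a pr => P.exists_decidingStep hinh pr a
  -- `Nat.unpair` makes every pair recur infinitely often
  refine ⟨top, refines_top, dot, Function.surjInv hdot, Function.surjInv_eq hdot,
    fun i => pairs i.unpair.1, fun pr N => ?_, child, decidingStep_child⟩
  obtain ⟨k, rfl⟩ := hpairs pr
  exact ⟨Nat.pair k N, Nat.right_le_pair k N, by simp⟩

variable (C : BaireCoding P)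

open Classical in
noncomputable def next (a : V) (i n : ℕ) : V :=
  if P.DecidingStep (C.pair i) a (C.dot n) then C.dot n else C.child a (C.pair i)

lemma decidingStep_next (a : V) (i n : ℕ) : P.DecidingStep (C.pair i) a (C.next a i n) := by
  unfold next
  split_ifs with h
  · exact h
  · exact C.decidingStep_child a _

lemma next_index {a b : V} {i : ℕ} (h : P.DecidingStep (C.pair i) a b) :
    C.next a i (C.index b) = b := by
  simp [next, C.dot_index, h]

noncomputable def walk : V → ℕ → List ℕ → V
  | a, _, [] => a
  | a, i, n :: s => walk (C.next a i n) (i + 1) s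

lemma walk_append (a : V) (i : ℕ) (s u : List ℕ) :
    C.walk a i (s ++ u) = C.walk (C.walk a i s) (i + s.length) u := by
  induction s generalizing a i with
  | nil => rfl
  | cons n s ih =>
    simp only [List.cons_append, walk, ih, List.length_cons]
    rw [Nat.add_assoc, Nat.add_comm 1]

lemma walk_refines (a : V) (i : ℕ) (s : List ℕ) : P.refines (C.walk a i s) a := by
  induction s generalizing a i with
  | nil => exact P.refines_refl a
  | cons n s ih => exact P.refines_trans _ _ _ (ih _ _) (C.decidingStep_next a i n).1.1

lemma walk_strict (a : V) (i : ℕ) {s : List ℕ} (hs : s ≠ []) : P.strict (C.walk a i s) a := by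
  obtain ⟨n, s, rfl⟩ := List.exists_cons_of_ne_nil hs
  exact P.strict_of_refines_of_strict (C.walk_refines _ _ s) (C.decidingStep_next a i n).1

noncomputable def decode (s : List ℕ) : V := C.walk C.top 0 s

lemma decode_append (s u : List ℕ) : C.decode (s ++ u) = C.walk (C.decode s) s.length u := by
  rw [decode, walk_append, Nat.zero_add]
  rfl

lemma decode_concat (s : List ℕ) (n : ℕ) :
    C.decode (s ++ [n]) = C.next (C.decode s) s.length n := by
  rw [decode_append]
  rfl

lemma decode_refines_of_prefix {s u : List ℕ} (h : s <+: u) :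
    P.refines (C.decode u) (C.decode s) := by
  obtain ⟨v, rfl⟩ := h
  rw [decode_append]
  exact C.walk_refines _ _ _

lemma decode_strict_of_prefix {s u : List ℕ} (h : s <+: u) (hne : u ≠ s) :
    P.strict (C.decode u) (C.decode s) := by
  obtain ⟨v, rfl⟩ := h
  rw [decode_append]
  exact C.walk_strict _ _ fun hv => hne (by simp [hv])

lemma decides_decode {s : List ℕ} {i : ℕ} (hi : i < s.length) :
    P.Decides (C.decode s) (C.pair i) := by
  have htake : s.take (i + 1) = s.take i ++ [s[i]] := by
    rw [List.take_add_one, List.getElem?_eq_getElem hi, Option.toList_some]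
  have hstep := C.decidingStep_next (C.decode (s.take i)) (s.take i).length s[i]
  rw [← decode_concat, ← htake, List.length_take_of_le hi.le] at hstep
  exact hstep.2.mono (C.decode_refines_of_prefix (List.take_prefix _ _))

noncomputable def spread : PreNaturalSpace (List ℕ) where
  countable' := inferInstance
  apart s t := P.apart (C.decode s) (C.decode t)
  refines s t := t <+: s
  apart_dec := Classical.decRel _
  refines_dec := Classical.decRel _
  apart_symm _ _ := P.apart_symm _ _
  apart_irrefl _ := P.apart_irrefl _
  apart_mono _ _ _ h := P.apart_mono _ _ _ (C.decode_refines_of_prefix h)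
  refines_refl := List.prefix_refl
  refines_trans _ _ _ h₁ h₂ := h₂.trans h₁
  refines_antisymm _ _ h₁ h₂ := h₂.eq_of_length (le_antisymm h₂.length_le h₁.length_le)

lemma spread_refines : C.spread.refines = BairePre.refines := rfl

lemma isTree_spread : C.spread.IsTree := BairePre.isTree

lemma succTrailsArePoints_spread : C.spread.SuccTrailsArePoints := by
  intro q hq
  have hlen : ∀ n, (q n).length = (q 0).length + n := by
    intro n
    induction n with
    | zero => rfl
    | succ n ih =>
      obtain ⟨k, hk⟩ := BairePre.isSucc_iff.mp (hq n)
      rw [hk, List.length_append, ih, List.length_singleton, Nat.add_assoc]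
  refine ⟨fun n => (hq n).1.1, fun n => ⟨n + 1, (hq n).1⟩, fun s s' hss' => ?_⟩
  obtain ⟨i, hi, hpair⟩ := C.exists_pair_eq (C.decode s, C.decode s') (q 0).length
  obtain ⟨d, rfl⟩ : ∃ d, i = (q 0).length + d := ⟨i - (q 0).length, by omega⟩
  have hdec := C.decides_decode (s := q (d + 1)) (i := (q 0).length + d) (by rw [hlen (d + 1)]; omega)
  rw [hpair] at hdec
  exact ⟨d + 1, hdec hss'⟩

lemma isNaturalSpace_spread : C.spread.IsNaturalSpace := by
  refine ⟨⟨[], fun _ => List.nil_prefix⟩, fun s => ⟨fun k => s ++ List.replicate k 0, ?_, 1, ?_⟩⟩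
  · refine C.succTrailsArePoints_spread _ fun n => BairePre.isSucc_iff.mpr ⟨0, ?_⟩
    simp [List.replicate_succ']
  · exact ⟨⟨[0], rfl⟩, by simp⟩

lemma isPoint_decode {q : ℕ → List ℕ} (hq : C.spread.IsPoint q) :
    P.IsPoint fun n => C.decode (q n) where
  mono n := C.decode_refines_of_prefix (hq.mono n)
  shrink n := (hq.shrink n).imp fun _ hm => C.decode_strict_of_prefix hm.1 hm.2
  decides x y hxy := by
    obtain ⟨i, -, hpair⟩ := C.exists_pair_eq (x, y) 0
    obtain ⟨M, hM⟩ := List.exists_le_length_of_forall_exists_prefix_ne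
      (fun n => (hq.shrink n).imp fun _ hm => hm) (i + 1)
    have hdec := C.decides_decode (s := q M) (i := i) hM
    rw [hpair] at hdec
    exact ⟨M, hdec hxy⟩

noncomputable def decodeMorphism : RefMorphism C.spread P :=
  ⟨C.decode, fun _ => C.isPoint_decode, fun _ _ _ _ h => h⟩

/-- `acc` lists the dots picked so far: the current dot is its last one (initially `top`) and the
current depth is its length. -/
def Accepts (acc : List V) (b : V) : Prop :=
  P.DecidingStep (C.pair acc.length) (acc.getLastD C.top) b

open Classical in
noncomputable def pickStep (acc : List V) (b : V) : List V :=
  if C.Accepts acc b then acc ++ [b] else acc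

noncomputable def picks (l : List V) : List V := l.foldl C.pickStep []

noncomputable def encode (l : List V) : List ℕ := (C.picks l).map C.index

lemma exists_foldl_pickStep_eq_append (acc u : List V) :
    ∃ w, w.Sublist u ∧ u.foldl C.pickStep acc = acc ++ w := by
  induction u generalizing acc with
  | nil => exact ⟨[], List.Sublist.slnil, by simp⟩
  | cons b u ih =>
    rw [List.foldl_cons]
    by_cases hb : C.Accepts acc b
    · obtain ⟨w, hw, heq⟩ := ih (acc ++ [b])
      rw [pickStep, if_pos hb, heq]
      exact ⟨b :: w, hw.cons_cons b, by simp⟩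
    · obtain ⟨w, hw, heq⟩ := ih acc
      rw [pickStep, if_neg hb, heq]
      exact ⟨w, hw.cons b, rfl⟩

lemma length_lt_foldl_pickStep {acc u : List V} {b : V} (hb : b ∈ u) (h : C.Accepts acc b) :
    acc.length < (u.foldl C.pickStep acc).length := by
  induction u generalizing acc with
  | nil => simp at hb
  | cons c u ih =>
    rw [List.foldl_cons]
    by_cases hc : C.Accepts acc c
    · obtain ⟨w, -, heq⟩ := C.exists_foldl_pickStep_eq_append (acc ++ [c]) u
      rw [pickStep, if_pos hc, heq]
      simp
    · rw [pickStep, if_neg hc]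
      rcases List.mem_cons.mp hb with rfl | hb
      · exact absurd h hc
      · exact ih hb h

lemma picks_append (l u : List V) : C.picks (l ++ u) = u.foldl C.pickStep (C.picks l) :=
  List.foldl_append

lemma picks_prefix_of_prefix {l l' : List V} (h : l <+: l') : C.picks l <+: C.picks l' := by
  obtain ⟨u, rfl⟩ := h
  obtain ⟨w, -, heq⟩ := C.exists_foldl_pickStep_eq_append (C.picks l) u
  rw [picks_append, heq]
  exact List.prefix_append _ _

lemma encode_prefix_of_prefix {l l' : List V} (h : l <+: l') : C.encode l <+: C.encode l' :=
  (C.picks_prefix_of_prefix h).map C.index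

lemma getLastD_picks_eq_or_mem (l : List V) :
    (C.picks l).getLastD C.top = C.top ∨ (C.picks l).getLastD C.top ∈ l := by
  obtain ⟨w, hw, heq⟩ := C.exists_foldl_pickStep_eq_append [] l
  rw [picks, heq, List.nil_append]
  rcases List.eq_nil_or_concat' w with rfl | ⟨w', x, rfl⟩
  · exact Or.inl rfl
  · exact Or.inr (hw.subset (by simp))

lemma getLastD_picks_append_mem {l u : List V}
    (h : (C.picks l).length < (C.picks (l ++ u)).length) : (C.picks (l ++ u)).getLastD C.top ∈ u := by
  obtain ⟨w, hw, heq⟩ := C.exists_foldl_pickStep_eq_append (C.picks l) u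
  rw [picks_append, heq] at h ⊢
  rcases List.eq_nil_or_concat' w with rfl | ⟨w', x, rfl⟩
  · simp at h
  · rw [← List.append_assoc, List.getLastD_concat]
    exact hw.subset (by simp)

lemma decode_encode (l : List V) : C.decode (C.encode l) = (C.picks l).getLastD C.top := by
  suffices ∀ acc : List V, C.decode (acc.map C.index) = acc.getLastD C.top →
      C.decode ((l.foldl C.pickStep acc).map C.index) = (l.foldl C.pickStep acc).getLastD C.top
    from this [] rfl
  induction l with
  | nil => exact fun _ h => h
  | cons b l ih =>
    intro acc hacc
    refine ih _ ?_
    by_cases hb : C.Accepts acc b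
    · rw [pickStep, if_pos hb, List.map_append, List.map_singleton, decode_concat, hacc,
        List.length_map, List.getLastD_concat]
      exact C.next_index hb
    · rwa [pickStep, if_neg hb]

lemma getLast_refines_getLastD_picks (t : P.trailSpace.Pt) {n M : ℕ} (hnM : n ≤ M)
    (hne : (t.1 M).1 ≠ []) :
    P.refines ((t.1 M).1.getLast hne) ((C.picks (t.1 n).1).getLastD C.top) := by
  rcases C.getLastD_picks_eq_or_mem (t.1 n).1 with h | h
  · rw [h]
    exact C.refines_top _
  · exact getLast_refines_of_chain (t.1 M).2 hne ((trailPoint_prefix t hnM).subset h)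

lemma exists_length_picks_lt (t : P.trailSpace.Pt) (n : ℕ) :
    ∃ M, n ≤ M ∧ (C.picks (t.1 n).1).length < (C.picks (t.1 M).1).length := by
  set acc := C.picks (t.1 n).1
  obtain ⟨m, hm⟩ := trailPoint_eventually_decides t (C.pair acc.length)
  obtain ⟨M₀, hM₀⟩ := trailPoint_exists_le_length t ((t.1 n).1.length + 2)
  set M := max n (max m M₀)
  have hlen : (t.1 n).1.length + 2 ≤ (t.1 M).1.length :=
    hM₀.trans (trailPoint_prefix t (by omega)).length_le
  obtain ⟨u, hu⟩ : (t.1 n).1 <+: (t.1 M).1 := trailPoint_prefix t (le_max_left _ _)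
  have hune : u ≠ [] := by rintro rfl; simp [← hu] at hlen
  have hne : (t.1 M).1 ≠ [] := by rw [← hu]; simp [hune]
  set b := (t.1 M).1.getLast hne
  -- the last dot `b` of a long enough trail is picked after `acc`
  have hb : b ∈ u := by
    refine List.mem_of_mem_getLast? ?_
    rw [← List.getLast?_append_of_ne_nil (t.1 n).1 hune, hu]
    exact List.getLast_mem_getLast? hne
  have hstrict : ∀ x ∈ (t.1 M).1.dropLast, P.strict b x :=
    fun _ => getLast_strict_of_mem_dropLast (t.1 M).2 hne
  have hacc : C.Accepts acc b := by
    refine ⟨?_, hm M (by omega) b (List.getLast_mem_getLast? hne)⟩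
    rcases C.getLastD_picks_eq_or_mem (t.1 n).1 with h | h
    · obtain ⟨x, hx⟩ := List.exists_mem_of_length_pos (l := (t.1 M).1.dropLast)
        (by rw [List.length_dropLast]; omega)
      rw [h]
      exact P.strict_of_strict_of_refines (hstrict x hx) (C.refines_top x)
    · refine hstrict _ ?_
      rw [← hu, List.dropLast_append_of_ne_nil hune]
      exact List.mem_append_left _ h
  refine ⟨M, le_max_left _ _, ?_⟩
  rw [← hu, picks_append]
  exact C.length_lt_foldl_pickStep hb hacc

lemma isPoint_encode (t : P.trailSpace.Pt) : C.spread.IsPoint fun n => C.encode (t.1 n).1 where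
  mono n := C.encode_prefix_of_prefix (trailPoint_prefix t n.le_succ)
  shrink n := by
    obtain ⟨M, hnM, hlt⟩ := C.exists_length_picks_lt t n
    refine ⟨M, C.encode_prefix_of_prefix (trailPoint_prefix t hnM), fun h => ?_⟩
    have := congrArg List.length h
    simp only [encode, List.length_map] at this
    omega
  decides s s' hss' := by
    obtain ⟨m, hm⟩ := trailPoint_eventually_decides t (C.decode s, C.decode s')
    obtain ⟨M₀, hM₀⟩ := trailPoint_exists_le_length t 1
    set m' := max m M₀
    have hne : (t.1 m').1 ≠ [] :=
      List.ne_nil_of_length_pos (hM₀.trans (trailPoint_prefix t (le_max_right m M₀)).length_le)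
    set c := (t.1 m').1.getLast hne
    obtain ⟨M, hM, hlt⟩ := C.exists_length_picks_lt t m'
    obtain ⟨u, hu⟩ := trailPoint_prefix t hM
    have hx := C.getLastD_picks_append_mem (u := u) (hu ▸ hlt)
    have hchain : ((t.1 m').1 ++ u).IsChain fun a b => P.strict b a := hu ▸ (t.1 M).2
    have hxc := (strict_of_chain_append hchain (List.getLast_mem hne) hx).1
    rw [hu] at hxc
    have hdec := (hm m' (le_max_left m M₀) c (List.getLast_mem_getLast? hne)).mono hxc
    exact ⟨M, by simpa only [spread, decode_encode] using hdec hss'⟩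

lemma encode_reflects_apart (t t' : P.trailSpace.Pt) {n : ℕ}
    (h : C.spread.apart (C.encode (t.1 n).1) (C.encode (t'.1 n).1)) :
    ∃ M, P.trailSpace.apart (t.1 M) (t'.1 M) := by
  obtain ⟨M₁, hM₁⟩ := trailPoint_exists_le_length t 1
  obtain ⟨M₂, hM₂⟩ := trailPoint_exists_le_length t' 1
  set M := max n (max M₁ M₂)
  have hne : (t.1 M).1 ≠ [] := by
    have := (trailPoint_prefix t (show M₁ ≤ M by omega)).length_le
    exact List.ne_nil_of_length_pos (by omega)
  have hne' : (t'.1 M).1 ≠ [] := by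
    have := (trailPoint_prefix t' (show M₂ ≤ M by omega)).length_le
    exact List.ne_nil_of_length_pos (by omega)
  simp only [spread, decode_encode] at h
  refine ⟨M, _, List.getLast_mem_getLast? hne, _, List.getLast_mem_getLast? hne', ?_⟩
  exact P.apart_mono_left (C.getLast_refines_getLastD_picks t (le_max_left _ _) hne)
    (P.apart_mono _ _ _ (C.getLast_refines_getLastD_picks t' (le_max_left _ _) hne') h)

noncomputable def encodeMorphism : RefMorphism P.trailSpace C.spread where
  toFun l := C.encode l.1
  maps_points t ht := C.isPoint_encode ⟨t, ht⟩
  reflects_apart t t' ht ht' := fun ⟨_, h⟩ => C.encode_reflects_apart ⟨t, ht⟩ ⟨t', ht'⟩ h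

lemma not_apart_decode_encode_segList (p : P.Pt) (n : ℕ) :
    ¬ P.apart (C.decode (C.encode (segList p.1 n))) (p.1 n) := by
  rw [decode_encode]
  rcases C.getLastD_picks_eq_or_mem (segList p.1 n) with h | h
  · rw [h]
    exact P.not_apart_of_refines (Or.inr (C.refines_top _))
  · obtain ⟨j, hj⟩ := exists_eq_of_mem_segList p.1 h
    exact hj ▸ p.2.not_apart j n

theorem areIsomorphic_spread : P.AreIsomorphic C.spread := by
  refine ⟨fun p => C.encodeMorphism.pointMap p.sharp, C.decodeMorphism.pointMap,
    Or.inr ⟨C.encodeMorphism, fun p => ⟨p.sharp, fun _ => rfl, rfl⟩⟩,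
    Or.inl ⟨C.decodeMorphism, fun _ => rfl⟩, ?_, ?_⟩
  · exact fun p ⟨n, hn⟩ => C.not_apart_decode_encode_segList p n hn
  · exact fun q ⟨n, hn⟩ => C.not_apart_decode_encode_segList (C.decodeMorphism.pointMap q) n hn

end BaireCoding

/-- classical: every natural space is spreadlike; indeed isomorphic
to a spread whose underlying tree is the tree `(ℕ*,⊑)` of natural Baire space. -/
theorem stmt10 {V : Type} (P : PreNaturalSpace V) (hP : P.IsNaturalSpace) :
    ∃ Q : PreNaturalSpace (List ℕ), Q.refines = BairePre.refines ∧
      Q.IsSpread ∧ Q.IsNaturalSpace ∧ P.AreIsomorphic Q := by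
  obtain ⟨C⟩ := BaireCoding.nonempty hP
  exact ⟨C.spread, C.spread_refines, ⟨C.isTree_spread, C.succTrailsArePoints_spread⟩,
    C.isNaturalSpace_spread, C.areIsomorphic_spread⟩
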